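/- Fix a finite connected weighted graph G, positive site weights α̂, and k ≥ 2. Let M_j denote the metastable generator on Ω_j, acting by M_j f(η) = Σ_{ξ∈Ω_j, ξ≠η} r^M_j(η,ξ)(f(ξ)−f(η)), where r^M_j(η,ξ) = Σ_{ζ∈Ξ_j} r^A_j(η,ζ)·lim_{t→∞}(e^{tB_j}1_ξ)(ζ), and let â_k : ℝ^{Ω_{k−1}} → ℝ^{Ω_k} be the restricted annihilation operator â_k g(η) = Σ_{x∈V} η_x g(η−δ_x). Then the intertwining relation M_k ∘ â_k = â_k ∘ M_{k−1} holds, i.e. M_k(â_k g)(η) = â_k(M_{k−1} g)(η) for every g : Ω_{k−1} → ℝ and η ∈ Ω_k. -/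

import Mathlib

open scoped BigOperators Classical

noncomputable section

/-- The configuration space of `k` particles on the finite site set `V`. -/
def Config (V : Type*) [Fintype V] (k : ℕ) : Type _ :=
  {η : V → ℕ // ∑ x, η x = k}

namespace Config

variable {V : Type*} [Fintype V] [DecidableEq V] {k : ℕ}

lemma apply_le (η : Config V k) (x : V) : η.1 x ≤ k := by
  have h := Finset.single_le_sum (f := η.1) (fun i _ => Nat.zero_le _) (Finset.mem_univ x)
  simpa [η.2] using h

instance instFintype : Fintype (Config V k) :=
  Fintype.ofInjective
    (fun η : Config V k => (fun x => (⟨η.1 x, Nat.lt_succ_of_le (η.apply_le x)⟩ : Fin (k+1))))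
    (fun a b hab => Subtype.ext (funext fun x => congrArg Fin.val (congrFun hab x)))

/-- The configuration `η - δ_x + δ_y` (move a particle from `x` to `y`);
by convention it is `η` itself when `η` has no particle at `x`. -/
def move (η : Config V k) (x y : V) : Config V k :=
  if h : η.1 x = 0 then η else
    ⟨fun z => η.1 z - (if z = x then 1 else 0) + (if z = y then 1 else 0), by
      have hle : ∀ z : V, (if z = x then 1 else 0) ≤ η.1 z := fun z => by
        by_cases hz : z = x
        · simpa [hz] using Nat.one_le_iff_ne_zero.2 h
        · simp [hz]
      have cast_term : ∀ z : V,
          ((η.1 z - (if z = x then 1 else 0) + (if z = y then 1 else 0) : ℕ) : ℤ)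
            = (η.1 z : ℤ) - (if z = x then 1 else 0) + (if z = y then 1 else 0) := by
        intro z
        rw [Nat.cast_add, Nat.cast_sub (hle z)]
        by_cases hz : z = x <;> by_cases hz' : z = y <;> simp [hz, hz']
      have key : ((∑ z, (η.1 z - (if z = x then 1 else 0) + (if z = y then 1 else 0)) : ℕ) : ℤ)
          = (k : ℤ) := by
        rw [Nat.cast_sum]
        rw [Finset.sum_congr rfl (fun z _ => cast_term z)]
        rw [Finset.sum_add_distrib, Finset.sum_sub_distrib]
        have h1 : (∑ z, (η.1 z : ℤ)) = (k : ℤ) := by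
          rw [← Nat.cast_sum, η.2]
        rw [h1]
        simp
      exact_mod_cast key⟩

/-- The configuration `η + δ_x`. -/
def addOne (η : Config V k) (x : V) : Config V (k + 1) :=
  ⟨fun z => η.1 z + (if z = x then 1 else 0), by
    rw [Finset.sum_add_distrib, η.2]
    simp⟩

end Config

section Defs

variable {V : Type*} [Fintype V] [DecidableEq V]

/-- The configuration with `k` particles stacked at `x`. -/
def stackConfig (V : Type*) [Fintype V] [DecidableEq V] (k : ℕ) (x : V) : Config V k :=
  ⟨fun z => if z = x then k else 0, by simp⟩

/-- Normalization constant `Z_{α,k}`. -/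
def sipZ (α : V → ℝ) (k : ℕ) : ℝ :=
  Real.Gamma ((∑ x, α x) + k) / (Real.Gamma (∑ x, α x) * (Nat.factorial k))

/-- The reversible (Dirichlet-multinomial) measure `μ_{α,k}` of SIP. -/
def sipMeasure (α : V → ℝ) {k : ℕ} (η : Config V k) : ℝ :=
  (sipZ α k)⁻¹ * ∏ x, Real.Gamma (α x + η.1 x) / (Real.Gamma (α x) * (Nat.factorial (η.1 x)))

/-- The Dirichlet form of `SIP_k(G, α)`. -/
def dirichletForm (c : V → V → ℝ) (α : V → ℝ) {k : ℕ} (f : Config V k → ℝ) : ℝ :=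
  (1 / 2) * ∑ η : Config V k, ∑ x, ∑ y,
    sipMeasure α η * (c x y * η.1 x * (α y + η.1 y) * (f (η.move x y) - f η) ^ 2)

/-- Mean of `f` under `μ_{α,k}`. -/
def sipMean (α : V → ℝ) {k : ℕ} (f : Config V k → ℝ) : ℝ :=
  ∑ η : Config V k, sipMeasure α η * f η

/-- Variance of `f` under `μ_{α,k}`. -/
def sipVar (α : V → ℝ) {k : ℕ} (f : Config V k → ℝ) : ℝ :=
  ∑ η : Config V k, sipMeasure α η * (f η - sipMean α f) ^ 2

/-- Squared `L²(μ_{α,k})`-norm of `f`. -/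
def sipNormSq (α : V → ℝ) {k : ℕ} (f : Config V k → ℝ) : ℝ :=
  ∑ η : Config V k, sipMeasure α η * (f η) ^ 2

/-- The spectral gap `gap_k(G,α)` of the `k`-particle SIP. -/
def sipGap (c : V → V → ℝ) (α : V → ℝ) (k : ℕ) : ℝ :=
  sInf {r : ℝ | ∃ f : Config V k → ℝ, (∃ η ζ : Config V k, f η ≠ f ζ) ∧
    r = dirichletForm c α f / sipVar α f}

/-- `gap_SIP(G,α) = inf_{k ≥ 2} gap_k(G,α)`. -/
def sipGapInf (c : V → V → ℝ) (α : V → ℝ) : ℝ :=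
  sInf {r : ℝ | ∃ k : ℕ, 2 ≤ k ∧ r = sipGap c α k}

/-- The simple graph underlying a symmetric family of conductances. -/
def graphOf (c : V → V → ℝ) : SimpleGraph V where
  Adj x y := x ≠ y ∧ (0 < c x y ∨ 0 < c y x)
  symm := ⟨fun x y h => ⟨h.1.symm, h.2.symm⟩⟩
  loopless := ⟨fun x h => h.1 rfl⟩

/-- The diameter of the weighted graph: maximal graph distance between two sites. -/
def graphDiam (c : V → V → ℝ) : ℕ :=
  Finset.univ.sup (fun p : V × V => (graphOf c).dist p.1 p.2)

/-- The minimal positive conductance. -/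
def cMin (c : V → V → ℝ) : ℝ :=
  sInf {r : ℝ | 0 < r ∧ ∃ x y, c x y = r}

/-- Minimal site weight. -/
def alphaMin (α : V → ℝ) : ℝ := sInf (Set.range α)

/-- Maximal site weight. -/
def alphaMax (α : V → ℝ) : ℝ := sSup (Set.range α)

/-- Conductances of the complete graph on `V`. -/
def completeCond (V : Type*) [DecidableEq V] : V → V → ℝ :=
  fun x y => if x = y then 0 else 1

/-- The generator matrix of `SIP_k(G,α)` acting on `ℝ^{Ξ_k}` by `mulVec`. -/
def sipMatrix (c : V → V → ℝ) (α : V → ℝ) (k : ℕ) : Matrix (Config V k) (Config V k) ℝ :=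
  fun η ζ => ∑ x, ∑ y, c x y * η.1 x * (α y + η.1 y) *
    ((if η.move x y = ζ then 1 else 0) - (if ζ = η then 1 else 0))

/-- The generator matrix `A_{β,k}` of `k` independent random walks. -/
def rwPartMatrix (c : V → V → ℝ) (β : V → ℝ) (k : ℕ) : Matrix (Config V k) (Config V k) ℝ :=
  fun η ζ => ∑ x, ∑ y, c x y * η.1 x * β y *
    ((if η.move x y = ζ then 1 else 0) - (if ζ = η then 1 else 0))

/-- The generator matrix `B_k` of the pure interaction (fast) dynamics. -/
def clumpMatrix (c : V → V → ℝ) (k : ℕ) : Matrix (Config V k) (Config V k) ℝ :=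
  fun η ζ => ∑ x, ∑ y, c x y * η.1 x * η.1 y *
    ((if η.move x y = ζ then 1 else 0) - (if ζ = η then 1 else 0))

/-- The generator matrix of the purely absorbing (killed) SIP. -/
def killedMatrix (c : V → V → ℝ) (α ω : V → ℝ) (k : ℕ) :
    Matrix (Config V k) (Config V k) ℝ :=
  fun η ζ => sipMatrix c α k η ζ - (if ζ = η then ∑ x, ω x * η.1 x else 0)

/-- `η ∈ Ω_k`: absorbing configurations for the fast dynamics. -/
def inOmega (c : V → V → ℝ) {k : ℕ} (η : Config V k) : Prop :=
  ∀ x y, c x y * η.1 x * η.1 y = 0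

/-- The number of occupied sites (stacks) of a configuration. -/
def numStacks {k : ℕ} (η : Config V k) : ℕ :=
  (Finset.univ.filter fun x => 0 < η.1 x).card

/-- Jump rates of `k` independent random walks: `r^A(η,ζ)`. -/
def rateA (c : V → V → ℝ) (β : V → ℝ) {k : ℕ} (η ζ : Config V k) : ℝ :=
  ∑ x, ∑ y, if η.1 x ≠ 0 ∧ η.move x y = ζ then c x y * η.1 x * β y else 0

/-- Metastable jump rates `r^M(η,ξ) = Σ_ζ r^A(η,ζ) h_ξ(ζ)`, given absorption
probabilities `h`. -/
def rateM (c : V → V → ℝ) (β : V → ℝ) {k : ℕ} (h : Config V k → Config V k → ℝ)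
    (η ξ : Config V k) : ℝ :=
  ∑ ζ, rateA c β η ζ * h ξ ζ

/-- The metastable generator on `Ω_k`, given absorption probabilities `h`. -/
def metaGen (c : V → V → ℝ) (β : V → ℝ) {k : ℕ} (h : Config V k → Config V k → ℝ)
    (g : Config V k → ℝ) (η : Config V k) : ℝ :=
  ∑ ξ, if inOmega c ξ ∧ ξ ≠ η then rateM c β h η ξ * (g ξ - g η) else 0

/-- The (restricted) annihilation operator `â_{k+1} g (η) = Σ_x η_x g(η - δ_x)`. -/
def annihilate {k : ℕ} (g : Config V k → ℝ) (η : Config V (k + 1)) : ℝ :=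
  ∑ x, ∑ ξ : Config V k, if ξ.addOne x = η then (η.1 x : ℝ) * g ξ else 0

/-- The SIP generator as an operator on functions. -/
def sipGen (c : V → V → ℝ) (α : V → ℝ) {k : ℕ} (f : Config V k → ℝ) (η : Config V k) : ℝ :=
  ∑ x, ∑ y, c x y * η.1 x * (α y + η.1 y) * (f (η.move x y) - f η)

/-- The purely absorbing (killed) SIP generator. -/
def killedGen (c : V → V → ℝ) (α ω : V → ℝ) {k : ℕ} (f : Config V k → ℝ)
    (η : Config V k) : ℝ :=
  sipGen c α f η - f η * ∑ x, ω x * η.1 x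

/-- Spectral gap of the killed `k`-particle SIP (Rayleigh quotient infimum). -/
def killedGap (c : V → V → ℝ) (α ω : V → ℝ) (k : ℕ) : ℝ :=
  sInf {r : ℝ | ∃ f : Config V k → ℝ, f ≠ 0 ∧
    r = (∑ η, sipMeasure α η * f η * (-(killedGen c α ω f η))) / sipNormSq α f}

/-- `λ_{k,k}(β)`: the variational bottom eigenvalue of `k` independent walks killed
upon two particles becoming adjacent. -/
def lamLevel (c : V → V → ℝ) (β : V → ℝ) (k : ℕ) : ℝ :=
  sInf {r : ℝ | ∃ f : Config V k → ℝ, f ≠ 0 ∧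
    (∀ η : Config V k, ¬(inOmega c η ∧ numStacks η = k) → f η = 0) ∧
    r = dirichletForm c β f / sipNormSq β f}


/-- The symmetrizing measure `ς_{β,k,m}` on stack configurations. -/
def stackMeasure (β : V → ℝ) {k : ℕ} (η : Config V k) : ℝ :=
  ∏ x, if 0 < η.1 x then β x / η.1 x else 1

/-- The lookdown generator of the SIP with killing, on labeled configurations. -/
def lookdownGen (c : V → V → ℝ) (α ω : V → ℝ) (k : ℕ) (φ : (Fin k → V) → ℝ)
    (v : Fin k → V) : ℝ :=
  (∑ i : Fin k, ∑ x, ∑ y, c x y * (if x = v i then 1 else 0) *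
      (α y + 2 * ∑ j : Fin k, (if (j : ℕ) < (i : ℕ) ∧ v j = y then 1 else 0)) *
      (φ (Function.update v i y) - φ v))
    - φ v * ∑ i, ω (v i)

/-- The unlabeling map `Φ_k` from labeled to unlabeled configurations. -/
def unlabel {k : ℕ} (v : Fin k → V) : Config V k :=
  ⟨fun z => (Finset.univ.filter fun i => v i = z).card, by
    have h := Finset.card_eq_sum_card_fiberwise
      (f := v) (s := Finset.univ) (t := Finset.univ) (fun i _ => Finset.mem_univ _)
    simpa using h.symm⟩

/-- The symmetrization operator `S_k`. -/
def symmetrize (k : ℕ) (φ : (Fin k → V) → ℝ) (v : Fin k → V) : ℝ :=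
  (1 / (Nat.factorial k : ℝ)) * ∑ σ : Equiv.Perm (Fin k), φ (fun i => v (σ i))

/-- `η + δ_x` on the full configuration space `ℕ^V`. -/
def addFn (η : V → ℕ) (x : V) : V → ℕ := fun z => η z + (if z = x then 1 else 0)

/-- `η - δ_x` on the full configuration space (truncated subtraction). -/
def remFn (η : V → ℕ) (x : V) : V → ℕ := fun z => η z - (if z = x then 1 else 0)

/-- `η - δ_x + δ_y` on the full configuration space; `η` itself when `η x = 0`. -/
def moveFn (η : V → ℕ) (x y : V) : V → ℕ :=
  if η x = 0 then η else fun z => η z - (if z = x then 1 else 0) + (if z = y then 1 else 0)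

/-- The generator of the non-conservative (open) SIP. -/
def openGen (c : V → V → ℝ) (α ω θ : V → ℝ) (f : (V → ℕ) → ℝ) (η : V → ℕ) : ℝ :=
  (∑ x, ∑ y, c x y * η x * (α y + η y) * (f (moveFn η x y) - f η))
  + ∑ x, ω x * ((η x : ℝ) * (1 + θ x) * (f (remFn η x) - f η)
      + θ x * (α x + η x) * (f (addFn η x) - f η))

/-- One-site Meixner duality function at density `0`:
`d_{a,0}(m,n) = (n!/(n-m)!) (Γ(a)/Γ(a+m)) 1{m ≤ n}`. -/
def dualD0 (a : ℝ) (m n : ℕ) : ℝ :=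
  if m ≤ n then (Nat.descFactorial n m : ℝ) * (Real.Gamma a / Real.Gamma (a + m)) else 0

/-- One-site Meixner duality function at density `ϱ`. -/
def dualD (a ϱ : ℝ) (m n : ℕ) : ℝ :=
  ∑ l ∈ Finset.range (m + 1), (Nat.choose m l : ℝ) * dualD0 a l n * (-ϱ) ^ (m - l)

/-- The orthogonal duality function `D_{α,ϱ}(ξ,η)`. -/
def dualityFn (α : V → ℝ) (ϱ : ℝ) {k : ℕ} (ξ : Config V k) (η : V → ℕ) : ℝ :=
  ∏ x, dualD (α x) ϱ (ξ.1 x) (η x)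

/-- The polynomial `F_{α,ϱ}^ψ` associated to `ψ : Ξ_k → ℝ`. -/
def liftF (α : V → ℝ) (ϱ : ℝ) {k : ℕ} (ψ : Config V k → ℝ) (η : V → ℕ) : ℝ :=
  ∑ ξ : Config V k, sipMeasure α ξ * ψ ξ * dualityFn α ϱ ξ η

end Defs


end

section AuxCombinatorics

open Finset

variable {V : Type*} [Fintype V] [DecidableEq V]

lemma Config.addOne_apply {k : ℕ} (ξ : Config V k) (x z : V) :
    (ξ.addOne x).1 z = ξ.1 z + (if z = x then 1 else 0) := rfl

lemma addOne_injective {k : ℕ} (x : V) :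
    Function.Injective (fun ξ : Config V k => ξ.addOne x) := by
  intro a b hab
  apply Subtype.ext; funext z
  have h := congrArg (fun c : Config V (k+1) => c.1 z) hab
  simp only [Config.addOne_apply] at h
  exact Nat.add_right_cancel h

lemma addOne_comm {k : ℕ} (ξ : Config V k) (a b : V) :
    (ξ.addOne a).addOne b = (ξ.addOne b).addOne a := by
  apply Subtype.ext; funext z
  simp only [Config.addOne_apply]
  omega

lemma addOne_ne_zero {k : ℕ} (ξ : Config V k) (z : V) : (ξ.addOne z).1 z ≠ 0 := by
  simp [Config.addOne_apply]

/-- Remove one particle at `z`. -/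
def csub {k : ℕ} (η : Config V (k+1)) (z : V) (_h : η.1 z ≠ 0) : Config V k :=
  ⟨fun w => η.1 w - (if w = z then 1 else 0), by
    have hle : ∀ w : V, (if w = z then 1 else 0) ≤ η.1 w := by
      intro w
      by_cases hw : w = z
      · simpa [hw] using Nat.one_le_iff_ne_zero.2 _h
      · simp [hw]
    have h1 : (∑ w, (η.1 w - (if w = z then 1 else 0))) + (∑ w : V, (if w = z then 1 else 0))
        = k + 1 := by
      rw [← Finset.sum_add_distrib]
      rw [Finset.sum_congr rfl (fun w _ => Nat.sub_add_cancel (hle w))]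
      exact η.2
    have h2 : (∑ w : V, (if w = z then 1 else 0)) = 1 := by
      simp
    show (∑ w, (η.1 w - (if w = z then 1 else 0))) = k
    omega⟩

lemma csub_apply {k : ℕ} (η : Config V (k+1)) (z : V) (h : η.1 z ≠ 0) (w : V) :
    (csub η z h).1 w = η.1 w - (if w = z then 1 else 0) := rfl

lemma csub_addOne {k : ℕ} (η : Config V (k+1)) (z : V) (h : η.1 z ≠ 0) :
    (csub η z h).addOne z = η := by
  apply Subtype.ext; funext w
  simp only [Config.addOne_apply, csub_apply]
  by_cases hw : w = z
  · subst hw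
    have := Nat.one_le_iff_ne_zero.2 h
    simp; omega
  · simp [hw]

lemma addOne_csub {k : ℕ} (ξ : Config V k) (z : V) (h : (ξ.addOne z).1 z ≠ 0) :
    csub (ξ.addOne z) z h = ξ :=
  addOne_injective z (show (csub (ξ.addOne z) z h).addOne z = ξ.addOne z by rw [csub_addOne])

lemma csub_addOne_comm {k : ℕ} (ρ : Config V (k+1)) (u z : V) (hz : z ≠ u)
    (h : ρ.1 z ≠ 0) (h2 : (ρ.addOne u).1 z ≠ 0) :
    csub (ρ.addOne u) z h2 = (csub ρ z h).addOne u := by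
  apply addOne_injective z
  show (csub (ρ.addOne u) z h2).addOne z = ((csub ρ z h).addOne u).addOne z
  rw [csub_addOne, addOne_comm, csub_addOne]

lemma sumAddOneCollapse {k : ℕ} (η : Config V (k+1)) (z : V) (F : Config V k → ℝ) :
    (∑ ξ : Config V k, if ξ.addOne z = η then F ξ else 0)
      = if h : η.1 z ≠ 0 then F (csub η z h) else 0 := by
  by_cases h : η.1 z ≠ 0
  · rw [dif_pos h]
    refine (Finset.sum_eq_single (csub η z h) ?_ ?_).trans ?_
    · intro ξ _ hne
      refine if_neg (fun he => hne ?_)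
      exact addOne_injective z (show ξ.addOne z = (csub η z h).addOne z by
        rw [csub_addOne]; exact he)
    · intro habs; exact absurd (Finset.mem_univ _) habs
    · rw [if_pos (csub_addOne η z h)]
  · rw [dif_neg h]
    push_neg at h
    apply Finset.sum_eq_zero
    intro ξ _
    rw [if_neg]
    intro he
    exact addOne_ne_zero ξ z (by rw [he, h])

lemma move_self {k : ℕ} (η : Config V k) (x : V) : η.move x x = η := by
  unfold Config.move
  by_cases h : η.1 x = 0
  · erw [dif_pos h]
  · erw [dif_neg h]
    apply Subtype.ext; funext w
    simp only
    by_cases hw : w = x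
    · subst hw; have := Nat.one_le_iff_ne_zero.2 h; simp; omega
    · simp [hw]

lemma move_zero {k : ℕ} (η : Config V k) (x y : V) (h : η.1 x = 0) : η.move x y = η := by
  unfold Config.move; erw [dif_pos h]

lemma addOne_move {k : ℕ} (ρ : Config V k) {x y : V} (hxy : x ≠ y) :
    (ρ.addOne x).move x y = ρ.addOne y := by
  unfold Config.move
  erw [dif_neg (addOne_ne_zero ρ x)]
  apply Subtype.ext; funext w
  simp only [Config.addOne_apply]
  by_cases h1 : w = x
  · by_cases h2 : w = y
    · exact absurd (h1.symm.trans h2) hxy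
    · simp [h1, h2]
  · by_cases h2 : w = y <;> simp [h1, h2]

lemma move_eq_csub_addOne {k : ℕ} (η : Config V (k+1)) (x y : V) (hx : η.1 x ≠ 0)
    (hxy : x ≠ y) : η.move x y = (csub η x hx).addOne y := by
  conv_lhs => rw [← csub_addOne η x hx]
  exact addOne_move _ hxy

lemma annihilate_eq {k : ℕ} (g : Config V k → ℝ) (η : Config V (k+1)) :
    annihilate g η
      = ∑ z, if h : η.1 z ≠ 0 then (η.1 z : ℝ) * g (csub η z h) else 0 := by
  unfold annihilate
  refine Finset.sum_congr rfl (fun z _ => ?_)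
  rw [show (∑ ξ : Config V k, if ξ.addOne z = η then (η.1 z : ℝ) * g ξ else 0)
      = if h : η.1 z ≠ 0 then (η.1 z : ℝ) * g (csub η z h) else 0
    from sumAddOneCollapse η z (fun ξ => (η.1 z : ℝ) * g ξ)]

end AuxCombinatorics


section AuxIntertwine

open Finset

variable {V : Type*} [Fintype V] [DecidableEq V]

/-- Helper summand. -/
def Tfun {k : ℕ} (g : Config V (k+1) → ℝ) (ρ : Config V (k+1)) (u z : V) : ℝ :=
  if h : ρ.1 z ≠ 0 then (ρ.1 z : ℝ) * g ((csub ρ z h).addOne u) else 0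

lemma Tfun_self {k : ℕ} (g : Config V (k+1) → ℝ) (ρ : Config V (k+1)) (u : V) :
    Tfun g ρ u u = (ρ.1 u : ℝ) * g ρ := by
  unfold Tfun
  by_cases h : ρ.1 u ≠ 0
  · rw [dif_pos h, csub_addOne]
  · rw [dif_neg h]; push_neg at h; rw [h]; push_cast; ring

lemma Tfun_move {k : ℕ} (g : Config V (k+1) → ℝ) (ρ : Config V (k+1)) {x y : V}
    (hxy : x ≠ y) : Tfun g ρ y x = (ρ.1 x : ℝ) * g (ρ.move x y) := by
  unfold Tfun
  by_cases h : ρ.1 x ≠ 0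
  · rw [dif_pos h, ← move_eq_csub_addOne ρ x y h hxy]
  · rw [dif_neg h]; push_neg at h; rw [h]; push_cast; ring

lemma AA {k : ℕ} (g : Config V (k+1) → ℝ) (ρ : Config V (k+1)) (u : V) :
    annihilate g (ρ.addOne u) = ((ρ.1 u : ℝ) + 1) * g ρ
      + ∑ z ∈ Finset.univ.erase u, Tfun g ρ u z := by
  rw [annihilate_eq]
  rw [← Finset.add_sum_erase Finset.univ _ (Finset.mem_univ u)]
  congr 1
  · rw [dif_pos (addOne_ne_zero ρ u), addOne_csub]
    have : (ρ.addOne u).1 u = ρ.1 u + 1 := by simp [Config.addOne_apply]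
    rw [this]; push_cast; ring
  · refine Finset.sum_congr rfl (fun z hz => ?_)
    have hzu : z ≠ u := (Finset.mem_erase.1 hz).1
    have haz : (ρ.addOne u).1 z = ρ.1 z := by simp [Config.addOne_apply, hzu]
    unfold Tfun
    by_cases h : ρ.1 z ≠ 0
    · have h2 : (ρ.addOne u).1 z ≠ 0 := by rw [haz]; exact h
      rw [dif_pos h2, dif_pos h, csub_addOne_comm ρ u z hzu h h2, haz]
    · have h2 : ¬ (ρ.addOne u).1 z ≠ 0 := by rw [haz]; exact h
      rw [dif_neg h2, dif_neg h]

lemma PA {k : ℕ} (g : Config V (k+1) → ℝ) (η : Config V (k+1+1)) (x y : V) :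
    (η.1 x : ℝ) * (annihilate g (η.move x y) - annihilate g η)
      = ∑ z, (if h : η.1 z ≠ 0 then (η.1 z : ℝ) * ((csub η z h).1 x : ℝ) *
          (g ((csub η z h).move x y) - g (csub η z h)) else 0) := by
  by_cases hxy : x = y
  · subst hxy
    rw [move_self, sub_self, mul_zero]
    symm; apply Finset.sum_eq_zero; intro z _
    by_cases h : η.1 z ≠ 0
    · rw [dif_pos h, move_self, sub_self, mul_zero]
    · rw [dif_neg h]
  by_cases hx : η.1 x = 0
  · have hxr : ((η.1 x : ℕ) : ℝ) = 0 := by rw [hx]; norm_num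
    rw [hxr, zero_mul]
    symm; apply Finset.sum_eq_zero; intro z _
    by_cases h : η.1 z ≠ 0
    · rw [dif_pos h]
      have hzx : z ≠ x := fun he => h (he ▸ hx)
      have hcx : (csub η z h).1 x = 0 := by
        rw [csub_apply, if_neg (fun hh : x = z => hzx hh.symm)]
        omega
      rw [hcx]; push_cast; ring
    · rw [dif_neg h]
  · -- main case
    obtain ⟨ρ, rfl⟩ : ∃ ρ : Config V (k+1), ρ.addOne x = η :=
      ⟨csub η x hx, csub_addOne η x hx⟩
    have hax : (ρ.addOne x).1 x = ρ.1 x + 1 := by simp [Config.addOne_apply]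
    have hx' : (ρ.addOne x).1 x ≠ 0 := addOne_ne_zero ρ x
    have herase : ∀ z ∈ Finset.univ.erase x,
        (if h : (ρ.addOne x).1 z ≠ 0 then ((ρ.addOne x).1 z : ℝ) *
            ((csub (ρ.addOne x) z h).1 x : ℝ) *
            (g ((csub (ρ.addOne x) z h).move x y) - g (csub (ρ.addOne x) z h)) else 0)
          = ((ρ.1 x : ℝ) + 1) * (Tfun g ρ y z - Tfun g ρ x z) := by
      intro z hz
      have hzx : z ≠ x := (Finset.mem_erase.1 hz).1
      have haz : (ρ.addOne x).1 z = ρ.1 z := by simp [Config.addOne_apply, hzx]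
      by_cases h : ρ.1 z ≠ 0
      · have h2 : (ρ.addOne x).1 z ≠ 0 := by rw [haz]; exact h
        rw [dif_pos h2, csub_addOne_comm ρ x z hzx h h2]
        unfold Tfun
        rw [dif_pos h, dif_pos h]
        have e1 : ((csub ρ z h).addOne x).1 x = (csub ρ z h).1 x + 1 := by
          simp [Config.addOne_apply]
        have e2 : (csub ρ z h).1 x = ρ.1 x := by
          rw [csub_apply, if_neg (fun hh : x = z => hzx hh.symm)]; omega
        rw [addOne_move _ hxy, haz, e1, e2]
        push_cast; ring
      · have h2 : ¬ (ρ.addOne x).1 z ≠ 0 := by rw [haz]; exact h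
        rw [dif_neg h2]
        unfold Tfun
        rw [dif_neg h, dif_neg h]
        ring
    have h4 : Tfun g ρ y x + ∑ z ∈ Finset.univ.erase x, Tfun g ρ y z
        = Tfun g ρ y y + ∑ z ∈ Finset.univ.erase y, Tfun g ρ y z := by
      rw [Finset.add_sum_erase _ _ (Finset.mem_univ x),
        Finset.add_sum_erase _ _ (Finset.mem_univ y)]
    rw [Tfun_move g ρ hxy, Tfun_self g ρ y] at h4
    rw [addOne_move ρ hxy]
    rw [← Finset.add_sum_erase Finset.univ _ (Finset.mem_univ x)]
    simp only [dif_pos hx']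
    rw [addOne_csub]
    rw [Finset.sum_congr rfl herase]
    rw [AA g ρ y, AA g ρ x, hax]
    rw [← Finset.mul_sum, Finset.sum_sub_distrib]
    push_cast
    linear_combination (-(ρ.1 x : ℝ) - 1) * h4

lemma PB {k : ℕ} (g : Config V (k+1) → ℝ) (η : Config V (k+1+1)) (x y : V) :
    (η.1 x : ℝ) * (η.1 y : ℝ) * (annihilate g (η.move x y) - annihilate g η)
      = (∑ z, if h : η.1 z ≠ 0 then (η.1 z : ℝ) * ((csub η z h).1 x : ℝ) *
            ((csub η z h).1 y : ℝ) * (g ((csub η z h).move x y) - g (csub η z h)) else 0)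
        + (η.1 x : ℝ) * (η.1 y : ℝ) *
          ((if h : η.1 x ≠ 0 then g (csub η x h) else 0)
            - (if h : η.1 y ≠ 0 then g (csub η y h) else 0)) := by
  by_cases hxy : x = y
  · subst hxy
    rw [move_self, sub_self, mul_zero, sub_self, mul_zero]
    symm
    rw [add_zero]
    apply Finset.sum_eq_zero; intro z _
    by_cases h : η.1 z ≠ 0
    · rw [dif_pos h, move_self, sub_self, mul_zero]
    · rw [dif_neg h]
  by_cases hy : η.1 y = 0
  · have hyr : ((η.1 y : ℕ) : ℝ) = 0 := by rw [hy]; norm_num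
    rw [hyr, mul_zero, zero_mul, zero_mul, add_zero]
    symm
    apply Finset.sum_eq_zero; intro z _
    by_cases h : η.1 z ≠ 0
    · rw [dif_pos h]
      have hzy : z ≠ y := fun he => h (he ▸ hy)
      have hcy : (csub η z h).1 y = 0 := by
        rw [csub_apply, if_neg (fun hh : y = z => hzy hh.symm)]
        omega
      rw [hcy]; push_cast; ring
    · rw [dif_neg h]
  by_cases hx : η.1 x = 0
  · have hxr : ((η.1 x : ℕ) : ℝ) = 0 := by rw [hx]; norm_num
    rw [hxr, zero_mul, zero_mul, zero_mul, add_zero]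
    symm
    apply Finset.sum_eq_zero; intro z _
    by_cases h : η.1 z ≠ 0
    · rw [dif_pos h]
      have hzx : z ≠ x := fun he => h (he ▸ hx)
      have hcx : (csub η z h).1 x = 0 := by
        rw [csub_apply, if_neg (fun hh : x = z => hzx hh.symm)]
        omega
      rw [hcx]; push_cast; ring
    · rw [dif_neg h]
  · -- main case
    have hyx : y ≠ x := fun he => hxy he.symm
    obtain ⟨ρ, rfl⟩ : ∃ ρ : Config V (k+1), ρ.addOne x = η :=
      ⟨csub η x hx, csub_addOne η x hx⟩
    have hax : (ρ.addOne x).1 x = ρ.1 x + 1 := by simp [Config.addOne_apply]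
    have hay : (ρ.addOne x).1 y = ρ.1 y := by simp [Config.addOne_apply, hyx]
    have hρy : ρ.1 y ≠ 0 := by rw [hay] at hy; exact hy
    have hb1 : 1 ≤ ρ.1 y := Nat.one_le_iff_ne_zero.2 hρy
    have hx' : (ρ.addOne x).1 x ≠ 0 := addOne_ne_zero ρ x
    have hymem : y ∈ Finset.univ.erase x := Finset.mem_erase.2 ⟨hyx, Finset.mem_univ y⟩
    have hy2 : (ρ.addOne x).1 y ≠ 0 := by rw [hay]; exact hρy
    have ey1 : ((csub ρ y hρy).addOne x).1 x = ρ.1 x + 1 := by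
      simp [Config.addOne_apply, csub_apply, if_neg (fun hh : x = y => hxy hh)]
    have ey2 : ((csub ρ y hρy).addOne x).1 y = ρ.1 y - 1 := by
      simp [Config.addOne_apply, csub_apply, hyx]
    have herase : ∀ z ∈ (Finset.univ.erase x).erase y,
        (if h : (ρ.addOne x).1 z ≠ 0 then ((ρ.addOne x).1 z : ℝ) *
            ((csub (ρ.addOne x) z h).1 x : ℝ) * ((csub (ρ.addOne x) z h).1 y : ℝ) *
            (g ((csub (ρ.addOne x) z h).move x y) - g (csub (ρ.addOne x) z h)) else 0)
          = ((ρ.1 x : ℝ) + 1) * (ρ.1 y : ℝ) * (Tfun g ρ y z - Tfun g ρ x z) := by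
      intro z hz
      have hzy : z ≠ y := (Finset.mem_erase.1 hz).1
      have hzx : z ≠ x := (Finset.mem_erase.1 (Finset.mem_erase.1 hz).2).1
      have haz : (ρ.addOne x).1 z = ρ.1 z := by simp [Config.addOne_apply, hzx]
      by_cases h : ρ.1 z ≠ 0
      · have h2 : (ρ.addOne x).1 z ≠ 0 := by rw [haz]; exact h
        rw [dif_pos h2, csub_addOne_comm ρ x z hzx h h2]
        unfold Tfun
        rw [dif_pos h, dif_pos h]
        have e1 : ((csub ρ z h).addOne x).1 x = (csub ρ z h).1 x + 1 := by
          simp [Config.addOne_apply]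
        have e2 : (csub ρ z h).1 x = ρ.1 x := by
          rw [csub_apply, if_neg (fun hh : x = z => hzx hh.symm)]; omega
        have e3 : ((csub ρ z h).addOne x).1 y = ρ.1 y := by
          rw [Config.addOne_apply, csub_apply, if_neg (fun hh : y = z => hzy hh.symm),
            if_neg (fun hh : y = x => hyx hh)]
          omega
        rw [addOne_move _ hxy, haz, e1, e2, e3]
        push_cast; ring
      · have h2 : ¬ (ρ.addOne x).1 z ≠ 0 := by rw [haz]; exact h
        rw [dif_neg h2]
        unfold Tfun
        rw [dif_neg h, dif_neg h]
        ring
    have h4 : Tfun g ρ y x + ∑ z ∈ Finset.univ.erase x, Tfun g ρ y z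
        = Tfun g ρ y y + ∑ z ∈ Finset.univ.erase y, Tfun g ρ y z := by
      rw [Finset.add_sum_erase _ _ (Finset.mem_univ x),
        Finset.add_sum_erase _ _ (Finset.mem_univ y)]
    rw [Tfun_move g ρ hxy, Tfun_self g ρ y] at h4
    have h5 : ∑ z ∈ Finset.univ.erase x, Tfun g ρ y z
        = Tfun g ρ y y + ∑ z ∈ (Finset.univ.erase x).erase y, Tfun g ρ y z := by
      rw [Finset.add_sum_erase _ _ hymem]
    rw [Tfun_self g ρ y] at h5
    have h6 : ∑ z ∈ Finset.univ.erase x, Tfun g ρ x z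
        = Tfun g ρ x y + ∑ z ∈ (Finset.univ.erase x).erase y, Tfun g ρ x z := by
      rw [Finset.add_sum_erase _ _ hymem]
    have hTxy : Tfun g ρ x y = (ρ.1 y : ℝ) * g ((csub ρ y hρy).addOne x) := by
      unfold Tfun
      rw [dif_pos hρy]
    rw [hTxy] at h6
    -- now rewrite the goal
    rw [addOne_move ρ hxy]
    rw [← Finset.add_sum_erase Finset.univ _ (Finset.mem_univ x)]
    rw [← Finset.add_sum_erase _ _ hymem]
    simp only [dif_pos hx', dif_pos hy2]
    rw [addOne_csub]
    rw [csub_addOne_comm ρ x y hyx hρy hy2]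
    rw [addOne_move (csub ρ y hρy) hxy]
    rw [csub_addOne ρ y hρy]
    rw [Finset.sum_congr rfl herase]
    rw [AA g ρ y, AA g ρ x, hax, hay, ey1, ey2]
    rw [← Finset.mul_sum, Finset.sum_sub_distrib]
    rw [Nat.cast_sub hb1]
    push_cast
    linear_combination (-(ρ.1 x : ℝ) - 1) * (ρ.1 y : ℝ) * h4
      + ((ρ.1 x : ℝ) + 1) * (ρ.1 y : ℝ) * h5 - ((ρ.1 x : ℝ) + 1) * (ρ.1 y : ℝ) * h6

end AuxIntertwine


section AuxIntertwine2

open Finset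

variable {V : Type*} [Fintype V] [DecidableEq V]

lemma triple_swap {F : V → V → V → ℝ} :
    ∑ x, ∑ y, ∑ z, F x y z = ∑ z, ∑ x, ∑ y, F x y z := by
  calc ∑ x, ∑ y, ∑ z, F x y z = ∑ x, ∑ z, ∑ y, F x y z :=
        Finset.sum_congr rfl (fun x _ => Finset.sum_comm)
    _ = ∑ z, ∑ x, ∑ y, F x y z := Finset.sum_comm

lemma IA (c : V → V → ℝ) (β : V → ℝ) {k : ℕ} (g : Config V (k+1) → ℝ)
    (η : Config V (k+1+1)) :
    (∑ x, ∑ y, c x y * (η.1 x : ℝ) * β y * (annihilate g (η.move x y) - annihilate g η))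
      = annihilate (fun ξ => ∑ x, ∑ y, c x y * (ξ.1 x : ℝ) * β y * (g (ξ.move x y) - g ξ)) η := by
  have key : ∀ x y : V, c x y * (η.1 x : ℝ) * β y * (annihilate g (η.move x y) - annihilate g η)
      = ∑ z, (if h : η.1 z ≠ 0 then c x y * β y * ((η.1 z : ℝ) * ((csub η z h).1 x : ℝ) *
          (g ((csub η z h).move x y) - g (csub η z h))) else 0) := by
    intro x y
    have hPA := PA g η x y
    calc c x y * (η.1 x : ℝ) * β y * (annihilate g (η.move x y) - annihilate g η)
        = c x y * β y * ((η.1 x : ℝ) * (annihilate g (η.move x y) - annihilate g η)) := by ring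
      _ = c x y * β y * ∑ z, (if h : η.1 z ≠ 0 then (η.1 z : ℝ) * ((csub η z h).1 x : ℝ) *
            (g ((csub η z h).move x y) - g (csub η z h)) else 0) := by rw [hPA]
      _ = _ := by
            rw [Finset.mul_sum]
            refine Finset.sum_congr rfl (fun z _ => ?_)
            by_cases h : η.1 z ≠ 0
            · simp only [dif_pos h]
            · simp [dif_neg h]
  rw [Finset.sum_congr rfl (fun x _ => Finset.sum_congr rfl (fun y _ => key x y))]
  rw [triple_swap, annihilate_eq]
  refine Finset.sum_congr rfl (fun z _ => ?_)
  by_cases h : η.1 z ≠ 0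
  · simp only [dif_pos h]
    rw [Finset.mul_sum]
    refine Finset.sum_congr rfl (fun x _ => ?_)
    rw [Finset.mul_sum]
    refine Finset.sum_congr rfl (fun y _ => ?_)
    ring
  · simp only [dif_neg h]
    simp

lemma IB (c : V → V → ℝ) (hsymm : ∀ x y, c x y = c y x) {k : ℕ}
    (g : Config V (k+1) → ℝ) (η : Config V (k+1+1)) :
    (∑ x, ∑ y, c x y * (η.1 x : ℝ) * (η.1 y : ℝ) *
        (annihilate g (η.move x y) - annihilate g η))
      = annihilate (fun ξ => ∑ x, ∑ y, c x y * (ξ.1 x : ℝ) * (ξ.1 y : ℝ) *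
          (g (ξ.move x y) - g ξ)) η := by
  have key : ∀ x y : V, c x y * (η.1 x : ℝ) * (η.1 y : ℝ) *
        (annihilate g (η.move x y) - annihilate g η)
      = (∑ z, (if h : η.1 z ≠ 0 then c x y * ((η.1 z : ℝ) * ((csub η z h).1 x : ℝ) *
            ((csub η z h).1 y : ℝ) * (g ((csub η z h).move x y) - g (csub η z h))) else 0))
        + c x y * (η.1 x : ℝ) * (η.1 y : ℝ) *
          ((if h : η.1 x ≠ 0 then g (csub η x h) else 0)
            - (if h : η.1 y ≠ 0 then g (csub η y h) else 0)) := by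
    intro x y
    have hPB := PB g η x y
    calc c x y * (η.1 x : ℝ) * (η.1 y : ℝ) * (annihilate g (η.move x y) - annihilate g η)
        = c x y * ((η.1 x : ℝ) * (η.1 y : ℝ) * (annihilate g (η.move x y) - annihilate g η)) := by
          ring
      _ = c x y * ((∑ z, if h : η.1 z ≠ 0 then (η.1 z : ℝ) * ((csub η z h).1 x : ℝ) *
              ((csub η z h).1 y : ℝ) * (g ((csub η z h).move x y) - g (csub η z h)) else 0)
            + (η.1 x : ℝ) * (η.1 y : ℝ) *
              ((if h : η.1 x ≠ 0 then g (csub η x h) else 0)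
                - (if h : η.1 y ≠ 0 then g (csub η y h) else 0))) := by rw [hPB]
      _ = _ := by
            rw [mul_add, Finset.mul_sum]
            congr 1
            · refine Finset.sum_congr rfl (fun z _ => ?_)
              by_cases h : η.1 z ≠ 0
              · simp only [dif_pos h]
              · simp [dif_neg h]
            · ring
  rw [Finset.sum_congr rfl (fun x _ => Finset.sum_congr rfl (fun y _ => key x y))]
  have split : (∑ x, ∑ y, ((∑ z, (if h : η.1 z ≠ 0 then c x y * ((η.1 z : ℝ) *
          ((csub η z h).1 x : ℝ) * ((csub η z h).1 y : ℝ) *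
          (g ((csub η z h).move x y) - g (csub η z h))) else 0))
        + c x y * (η.1 x : ℝ) * (η.1 y : ℝ) *
          ((if h : η.1 x ≠ 0 then g (csub η x h) else 0)
            - (if h : η.1 y ≠ 0 then g (csub η y h) else 0))))
      = (∑ x, ∑ y, ∑ z, (if h : η.1 z ≠ 0 then c x y * ((η.1 z : ℝ) *
          ((csub η z h).1 x : ℝ) * ((csub η z h).1 y : ℝ) *
          (g ((csub η z h).move x y) - g (csub η z h))) else 0))
        + ∑ x, ∑ y, c x y * (η.1 x : ℝ) * (η.1 y : ℝ) *
          ((if h : η.1 x ≠ 0 then g (csub η x h) else 0)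
            - (if h : η.1 y ≠ 0 then g (csub η y h) else 0)) := by
    rw [← Finset.sum_add_distrib]
    refine Finset.sum_congr rfl (fun x _ => ?_)
    rw [← Finset.sum_add_distrib]
  rw [split]
  have cancel : (∑ x, ∑ y, c x y * (η.1 x : ℝ) * (η.1 y : ℝ) *
      ((if h : η.1 x ≠ 0 then g (csub η x h) else 0)
        - (if h : η.1 y ≠ 0 then g (csub η y h) else 0))) = 0 := by
    have e1 : (∑ x, ∑ y, c x y * (η.1 x : ℝ) * (η.1 y : ℝ) *
        ((if h : η.1 x ≠ 0 then g (csub η x h) else 0)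
          - (if h : η.1 y ≠ 0 then g (csub η y h) else 0)))
        = ∑ x, ∑ y, (c x y * (η.1 x : ℝ) * (η.1 y : ℝ) *
            (if h : η.1 x ≠ 0 then g (csub η x h) else 0)
          - c x y * (η.1 x : ℝ) * (η.1 y : ℝ) *
            (if h : η.1 y ≠ 0 then g (csub η y h) else 0)) := by
      refine Finset.sum_congr rfl (fun x _ => Finset.sum_congr rfl (fun y _ => by ring))
    rw [e1]
    rw [Finset.sum_congr rfl (fun x (_ : x ∈ Finset.univ) => Finset.sum_sub_distrib
      (s := Finset.univ) _ _)]
    rw [Finset.sum_sub_distrib]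
    rw [sub_eq_zero]
    rw [Finset.sum_comm]
    refine Finset.sum_congr rfl (fun y _ => Finset.sum_congr rfl (fun x _ => ?_))
    rw [hsymm x y]
    ring
  rw [cancel, add_zero, triple_swap, annihilate_eq]
  refine Finset.sum_congr rfl (fun z _ => ?_)
  by_cases h : η.1 z ≠ 0
  · simp only [dif_pos h]
    rw [Finset.mul_sum]
    refine Finset.sum_congr rfl (fun x _ => ?_)
    rw [Finset.mul_sum]
    refine Finset.sum_congr rfl (fun y _ => ?_)
    ring
  · simp only [dif_neg h]
    simp

end AuxIntertwine2


section AuxExp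

open Filter

variable {n : Type*} [Fintype n] [DecidableEq n]

/-- Entrywise derivative of `t ↦ exp (t • M)`, with `M` on the right. -/
lemma expEntryDeriv (M : Matrix n n ℝ) (t : ℝ) (i j : n) :
    HasDerivAt (fun u : ℝ => NormedSpace.exp (u • M) i j)
      ((NormedSpace.exp (t • M) * M) i j) t := by
  letI : SeminormedRing (Matrix n n ℝ) := Matrix.linftyOpSemiNormedRing
  letI : NormedRing (Matrix n n ℝ) := Matrix.linftyOpNormedRing
  letI : NormedAlgebra ℝ (Matrix n n ℝ) := Matrix.linftyOpNormedAlgebra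
  have h := hasDerivAt_exp_smul_const (𝕂 := ℝ) M t
  have hL : Continuous (fun m : Matrix n n ℝ => m i j) :=
    (continuous_apply j).comp (continuous_apply i)
  let L : Matrix n n ℝ →L[ℝ] ℝ :=
    ⟨⟨⟨fun m => m i j, fun a b => rfl⟩, fun c m => rfl⟩, hL⟩
  exact L.hasFDerivAt.comp_hasDerivAt t h

/-- Entrywise derivative of `t ↦ exp (t • M)`, with `M` on the left. -/
lemma expEntryDeriv' (M : Matrix n n ℝ) (t : ℝ) (i j : n) :
    HasDerivAt (fun u : ℝ => NormedSpace.exp (u • M) i j)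
      ((M * NormedSpace.exp (t • M)) i j) t := by
  letI : SeminormedRing (Matrix n n ℝ) := Matrix.linftyOpSemiNormedRing
  letI : NormedRing (Matrix n n ℝ) := Matrix.linftyOpNormedRing
  letI : NormedAlgebra ℝ (Matrix n n ℝ) := Matrix.linftyOpNormedAlgebra
  have h := hasDerivAt_exp_smul_const' (𝕂 := ℝ) M t
  have hL : Continuous (fun m : Matrix n n ℝ => m i j) :=
    (continuous_apply j).comp (continuous_apply i)
  let L : Matrix n n ℝ →L[ℝ] ℝ :=
    ⟨⟨⟨fun m => m i j, fun a b => rfl⟩, fun c m => rfl⟩, hL⟩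
  exact L.hasFDerivAt.comp_hasDerivAt t h

lemma exp_add_comm_matrix (M : Matrix n n ℝ) (s t : ℝ) :
    NormedSpace.exp ((s + t) • M)
      = NormedSpace.exp (s • M) * NormedSpace.exp (t • M) := by
  rw [add_smul]
  exact Matrix.exp_add_of_commute _ _ (Commute.smul_left (Commute.smul_right rfl t) s)

/-- If `M.mulVec v = 0` then `exp (t • M)` fixes `v`. -/
lemma exp_mulVec_fixed (M : Matrix n n ℝ) (v : n → ℝ) (hv : M.mulVec v = 0) (t : ℝ) :
    (NormedSpace.exp (t • M)).mulVec v = v := by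
  funext i
  have key : ∀ u : ℝ, HasDerivAt (fun s : ℝ => (NormedSpace.exp (s • M)).mulVec v i) 0 u := by
    intro u
    have h : HasDerivAt (fun s : ℝ => ∑ j, NormedSpace.exp (s • M) i j * v j)
        (∑ j, (NormedSpace.exp (u • M) * M) i j * v j) u := by
      apply HasDerivAt.fun_sum
      intro j _
      exact (expEntryDeriv M u i j).mul_const (v j)
    have e : (∑ j, (NormedSpace.exp (u • M) * M) i j * v j) = 0 := by
      have e1 : (∑ j, (NormedSpace.exp (u • M) * M) i j * v j)
          = ((NormedSpace.exp (u • M) * M).mulVec v) i := rfl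
      rw [e1, ← Matrix.mulVec_mulVec, hv]
      simp [Matrix.mulVec]
    rw [e] at h
    exact h
  have hconst : (fun s : ℝ => (NormedSpace.exp (s • M)).mulVec v i) t
      = (fun s : ℝ => (NormedSpace.exp (s • M)).mulVec v i) 0 :=
    is_const_of_deriv_eq_zero (fun u => (key u).differentiableAt)
      (fun u => (key u).deriv) t 0
  simp only at hconst
  rw [hconst, zero_smul, NormedSpace.exp_zero, Matrix.one_mulVec]

/-- If row `i` of `M` vanishes then `exp (t • M)` preserves the `i`-th entry. -/
lemma exp_mulVec_row_zero (M : Matrix n n ℝ) (i : n) (hrow : ∀ j, M i j = 0)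
    (v : n → ℝ) (t : ℝ) : (NormedSpace.exp (t • M)).mulVec v i = v i := by
  have key : ∀ u : ℝ, HasDerivAt (fun s : ℝ => (NormedSpace.exp (s • M)).mulVec v i) 0 u := by
    intro u
    have h : HasDerivAt (fun s : ℝ => ∑ j, NormedSpace.exp (s • M) i j * v j)
        (∑ j, (M * NormedSpace.exp (u • M)) i j * v j) u := by
      apply HasDerivAt.fun_sum
      intro j _
      exact (expEntryDeriv' M u i j).mul_const (v j)
    have e : (∑ j, (M * NormedSpace.exp (u • M)) i j * v j) = 0 := by
      apply Finset.sum_eq_zero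
      intro j _
      have : (M * NormedSpace.exp (u • M)) i j = 0 := by
        rw [Matrix.mul_apply]
        apply Finset.sum_eq_zero
        intro l _
        rw [hrow l, zero_mul]
      rw [this, zero_mul]
    rw [e] at h
    exact h
  have hconst : (fun s : ℝ => (NormedSpace.exp (s • M)).mulVec v i) t
      = (fun s : ℝ => (NormedSpace.exp (s • M)).mulVec v i) 0 :=
    is_const_of_deriv_eq_zero (fun u => (key u).differentiableAt)
      (fun u => (key u).deriv) t 0
  simp only at hconst
  rw [hconst, zero_smul, NormedSpace.exp_zero, Matrix.one_mulVec]

/-- If `exp(t•M).mulVec v` converges pointwise to `w`, then `exp(s•M).mulVec w = w`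
and `M.mulVec w = 0`. -/
lemma limit_harmonic (M : Matrix n n ℝ) (v w : n → ℝ)
    (hw : ∀ j, Tendsto (fun t : ℝ => (NormedSpace.exp (t • M)).mulVec v j)
      atTop (nhds (w j))) :
    M.mulVec w = 0 := by
  have fixed : ∀ s : ℝ, (NormedSpace.exp (s • M)).mulVec w = w := by
    intro s
    funext j
    have h1 : Tendsto (fun t : ℝ => (NormedSpace.exp ((t + s) • M)).mulVec v j)
        atTop (nhds (w j)) :=
      hw j |>.comp (tendsto_atTop_add_const_right atTop s tendsto_id)
    have h2 : Tendsto (fun t : ℝ => (NormedSpace.exp ((t + s) • M)).mulVec v j)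
        atTop (nhds ((NormedSpace.exp (s • M)).mulVec w j)) := by
      have e : ∀ t : ℝ, (NormedSpace.exp ((t + s) • M)).mulVec v j
          = ∑ l, NormedSpace.exp (s • M) j l *
              ((NormedSpace.exp (t • M)).mulVec v l) := by
        intro t
        rw [show (t + s) = (s + t) by ring, exp_add_comm_matrix, ← Matrix.mulVec_mulVec]
        rfl
      simp only [e]
      have : ((NormedSpace.exp (s • M)).mulVec w j)
          = ∑ l, NormedSpace.exp (s • M) j l * w l := rfl
      rw [this]
      exact tendsto_finset_sum _ (fun l _ => (hw l).const_mul _)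
    exact tendsto_nhds_unique h2 h1
  funext j
  have hd : HasDerivAt (fun s : ℝ => (NormedSpace.exp (s • M)).mulVec w j)
      (∑ l, (M * NormedSpace.exp ((0:ℝ) • M)) j l * w l) 0 := by
    apply HasDerivAt.fun_sum
    intro l _
    exact (expEntryDeriv' M 0 j l).mul_const (w l)
  have hd2 : HasDerivAt (fun s : ℝ => (NormedSpace.exp (s • M)).mulVec w j) 0 0 := by
    have : (fun s : ℝ => (NormedSpace.exp (s • M)).mulVec w j) = fun _ => w j := by
      funext s; rw [fixed s]
    rw [this]
    exact hasDerivAt_const 0 _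
  have he : (∑ l, (M * NormedSpace.exp ((0:ℝ) • M)) j l * w l) = 0 :=
    hd.unique hd2
  rw [zero_smul, NormedSpace.exp_zero, mul_one] at he
  exact he

end AuxExp


section AuxMax

open Finset

variable {V : Type*} [Fintype V] [DecidableEq V]

lemma triple_swap2 {α β : Type*} [Fintype α] [Fintype β] (F : α → α → β → ℝ) :
    ∑ x, ∑ y, ∑ z, F x y z = ∑ z, ∑ x, ∑ y, F x y z := by
  calc ∑ x, ∑ y, ∑ z, F x y z = ∑ x, ∑ z, ∑ y, F x y z :=
        Finset.sum_congr rfl (fun x _ => Finset.sum_comm)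
    _ = ∑ z, ∑ x, ∑ y, F x y z := Finset.sum_comm

lemma move_apply {k : ℕ} (η : Config V k) (x y z : V) (hx : η.1 x ≠ 0) :
    (η.move x y).1 z = η.1 z - (if z = x then 1 else 0) + (if z = y then 1 else 0) := by
  unfold Config.move
  erw [dif_neg hx]

lemma clump_mulVec (c : V → V → ℝ) {k : ℕ} (f : Config V k → ℝ) (η : Config V k) :
    (clumpMatrix c k).mulVec f η
      = ∑ x, ∑ y, c x y * (η.1 x : ℝ) * (η.1 y : ℝ) * (f (η.move x y) - f η) := by
  have e1 : (clumpMatrix c k).mulVec f η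
      = ∑ ζ, ∑ x, ∑ y, c x y * (η.1 x : ℝ) * (η.1 y : ℝ) *
          ((if η.move x y = ζ then (1:ℝ) else 0) - (if ζ = η then 1 else 0)) * f ζ := by
    unfold clumpMatrix Matrix.mulVec dotProduct
    refine Finset.sum_congr rfl (fun ζ _ => ?_)
    rw [Finset.sum_mul]
    exact Finset.sum_congr rfl (fun x _ => Finset.sum_mul _ _ _)
  rw [e1, ← triple_swap2]
  refine Finset.sum_congr rfl (fun x _ => Finset.sum_congr rfl (fun y _ => ?_))
  have e2 : ∀ ζ, c x y * (η.1 x : ℝ) * (η.1 y : ℝ) *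
        ((if η.move x y = ζ then (1:ℝ) else 0) - (if ζ = η then 1 else 0)) * f ζ
      = c x y * (η.1 x : ℝ) * (η.1 y : ℝ) *
        ((if η.move x y = ζ then f ζ else 0) - (if ζ = η then f ζ else 0)) := by
    intro ζ
    by_cases h2 : ζ = η
    · rw [h2]
      by_cases h1 : η.move x y = η <;> simp [h1] <;> try ring
    · by_cases h1 : η.move x y = ζ <;> simp [h1, h2] <;> try ring
  rw [Finset.sum_congr rfl (fun ζ _ => e2 ζ), ← Finset.mul_sum, Finset.sum_sub_distrib,
    Finset.sum_ite_eq, Finset.sum_ite_eq']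
  simp

lemma clump_row_zero (c : V → V → ℝ) {k : ℕ} (η : Config V k) (hη : inOmega c η)
    (ζ : Config V k) : clumpMatrix c k η ζ = 0 := by
  unfold clumpMatrix
  refine Finset.sum_eq_zero (fun x _ => Finset.sum_eq_zero (fun y _ => ?_))
  rw [hη x y, zero_mul]

lemma clump_mulVec_one (c : V → V → ℝ) {k : ℕ} :
    (clumpMatrix c k).mulVec (fun _ => (1:ℝ)) = 0 := by
  funext η
  rw [clump_mulVec]
  simp

/-- One allowed move of the fast (clumping) dynamics. -/
def StepRel (c : V → V → ℝ) {k : ℕ} (ρ σ : Config V k) : Prop :=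
  ∃ x y, 0 < c x y * (ρ.1 x : ℝ) * (ρ.1 y : ℝ) ∧ σ = ρ.move x y

lemma drain (c : V → V → ℝ) {k : ℕ} {x y : V} (hxy : x ≠ y) (hc : 0 < c x y) :
    ∀ (m : ℕ) (ρ : Config V k), ρ.1 x = m → ρ.1 y ≠ 0 →
      ∃ σ, Relation.ReflTransGen (StepRel c) ρ σ ∧ σ.1 x = 0 ∧ σ.1 y ≠ 0 ∧
        ∀ z, z ≠ x → z ≠ y → σ.1 z = ρ.1 z := by
  intro m
  induction m with
  | zero =>
    intro ρ h0 hy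
    exact ⟨ρ, Relation.ReflTransGen.refl, h0, hy, fun z _ _ => rfl⟩
  | succ m ih =>
    intro ρ hm hy
    have hx : ρ.1 x ≠ 0 := by omega
    have hpos : 0 < c x y * (ρ.1 x : ℝ) * (ρ.1 y : ℝ) := by
      apply mul_pos (mul_pos hc _) _
      · exact_mod_cast Nat.pos_of_ne_zero hx
      · exact_mod_cast Nat.pos_of_ne_zero hy
    have hstep : StepRel c ρ (ρ.move x y) := ⟨x, y, hpos, rfl⟩
    have hmx : (ρ.move x y).1 x = m := by
      rw [move_apply _ _ _ _ hx, if_pos rfl, if_neg hxy]; omega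
    have hmy : (ρ.move x y).1 y ≠ 0 := by
      rw [move_apply _ _ _ _ hx, if_pos rfl]; omega
    obtain ⟨σ, hr, h1, h2, h3⟩ := ih (ρ.move x y) hmx hmy
    refine ⟨σ, Relation.ReflTransGen.head hstep hr, h1, h2, fun z hzx hzy => ?_⟩
    rw [h3 z hzx hzy, move_apply _ _ _ _ hx, if_neg hzx, if_neg hzy]
    omega
lemma reach_omega (c : V → V → ℝ) (hnonneg : ∀ x y, 0 ≤ c x y) (hloop : ∀ x, c x x = 0)
    {k : ℕ} : ∀ ρ : Config V k, ∃ ξ, inOmega c ξ ∧ Relation.ReflTransGen (StepRel c) ρ ξ := by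
  suffices H : ∀ n (ρ : Config V k), numStacks ρ ≤ n →
      ∃ ξ, inOmega c ξ ∧ Relation.ReflTransGen (StepRel c) ρ ξ by
    exact fun ρ => H (numStacks ρ) ρ le_rfl
  intro n
  induction n with
  | zero =>
    intro ρ h0
    refine ⟨ρ, ?_, Relation.ReflTransGen.refl⟩
    intro x y
    have hzero : ρ.1 x = 0 := by
      by_contra hne
      have : x ∈ Finset.univ.filter (fun z => 0 < ρ.1 z) :=
        Finset.mem_filter.2 ⟨Finset.mem_univ x, Nat.pos_of_ne_zero hne⟩
      have : 0 < numStacks ρ := Finset.card_pos.2 ⟨x, this⟩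
      omega
    rw [hzero]
    push_cast
    ring
  | succ n ih =>
    intro ρ hn
    by_cases hΩ : inOmega c ρ
    · exact ⟨ρ, hΩ, Relation.ReflTransGen.refl⟩
    · simp only [inOmega, not_forall] at hΩ
      obtain ⟨x, y, hne⟩ := hΩ
      have hcne : c x y ≠ 0 := fun h => hne (by rw [h]; ring)
      have hc : 0 < c x y := lt_of_le_of_ne (hnonneg x y) (Ne.symm hcne)
      have hx : ρ.1 x ≠ 0 := fun h => hne (by rw [h]; push_cast; ring)
      have hy : ρ.1 y ≠ 0 := fun h => hne (by rw [h]; push_cast; ring)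
      have hxy : x ≠ y := fun h => hcne (h ▸ hloop x)
      obtain ⟨σ, hreach, hσx, hσy, hσz⟩ := drain c hxy hc (ρ.1 x) ρ rfl hy
      have hsub : Finset.univ.filter (fun z => 0 < σ.1 z)
          ⊆ (Finset.univ.filter (fun z => 0 < ρ.1 z)).erase x := by
        intro z hz
        have hz' : 0 < σ.1 z := (Finset.mem_filter.1 hz).2
        have hzx : z ≠ x := fun h => by rw [h, hσx] at hz'; omega
        refine Finset.mem_erase.2 ⟨hzx, Finset.mem_filter.2 ⟨Finset.mem_univ z, ?_⟩⟩
        by_cases hzy : z = y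
        · rw [hzy]; exact Nat.pos_of_ne_zero hy
        · rw [← hσz z hzx hzy]; exact hz'
      have hxmem : x ∈ Finset.univ.filter (fun z => 0 < ρ.1 z) :=
        Finset.mem_filter.2 ⟨Finset.mem_univ x, Nat.pos_of_ne_zero hx⟩
      have hcard : numStacks σ ≤ n := by
        have h1 := Finset.card_le_card hsub
        have h2 : ((Finset.univ.filter (fun z => 0 < ρ.1 z)).erase x).card
            = numStacks ρ - 1 := Finset.card_erase_of_mem hxmem
        have h3 : 1 ≤ numStacks ρ := Finset.card_pos.2 ⟨x, hxmem⟩ |>.nat_succ_le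
        unfold numStacks at *
        omega
      obtain ⟨ξ, hξ, hr2⟩ := ih σ hcard
      exact ⟨ξ, hξ, hreach.trans hr2⟩

lemma max_principle (c : V → V → ℝ) (hnonneg : ∀ x y, 0 ≤ c x y) (hloop : ∀ x, c x x = 0)
    {k : ℕ} (hne : Nonempty (Config V k)) (L : Config V k → ℝ)
    (hL : (clumpMatrix c k).mulVec L = 0) (h0 : ∀ ρ, inOmega c ρ → L ρ = 0) :
    ∀ ρ, L ρ = 0 := by
  have key : ∀ (L' : Config V k → ℝ), (clumpMatrix c k).mulVec L' = 0 →
      (∀ ρ, inOmega c ρ → L' ρ = 0) → ∀ ρ, L' ρ ≤ 0 := by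
    intro L' hL' h0' ρ
    obtain ⟨ρ0, _, hmax⟩ := Finset.exists_max_image Finset.univ L'
      ⟨Classical.arbitrary _, Finset.mem_univ _⟩
    have prop : ∀ a b, Relation.ReflTransGen (StepRel c) a b → L' a = L' ρ0 → L' b = L' ρ0 := by
      intro a b hab
      induction hab with
      | refl => exact id
      | @tail b' c' hab hbc ih =>
        intro ha
        have hb := ih ha
        obtain ⟨x, y, hpos, rfl⟩ := hbc
        have hharm : (∑ x', ∑ y', c x' y' * (b'.1 x' : ℝ) * (b'.1 y' : ℝ) *
            (L' (b'.move x' y') - L' b')) = 0 := by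
          rw [← clump_mulVec, hL']
          rfl
        have term_nonpos : ∀ x' y', c x' y' * (b'.1 x' : ℝ) * (b'.1 y' : ℝ) *
            (L' (b'.move x' y') - L' b') ≤ 0 := by
          intro x' y'
          have hcoeff : 0 ≤ c x' y' * (b'.1 x' : ℝ) * (b'.1 y' : ℝ) := by
            apply mul_nonneg (mul_nonneg (hnonneg x' y') _) _ <;> positivity
          have hdiff : L' (b'.move x' y') - L' b' ≤ 0 := by
            rw [hb]
            have := hmax (b'.move x' y') (Finset.mem_univ _)
            linarith
          calc c x' y' * (b'.1 x' : ℝ) * (b'.1 y' : ℝ) * (L' (b'.move x' y') - L' b')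
              ≤ c x' y' * (b'.1 x' : ℝ) * (b'.1 y' : ℝ) * 0 :=
                mul_le_mul_of_nonneg_left hdiff hcoeff
            _ = 0 := by ring
        have hall := (Finset.sum_eq_zero_iff_of_nonpos
          (fun x' _ => Finset.sum_nonpos (fun y' _ => term_nonpos x' y'))).1 hharm
        have hxy0 := (Finset.sum_eq_zero_iff_of_nonpos
          (fun y' _ => term_nonpos x y')).1 (hall x (Finset.mem_univ x)) y (Finset.mem_univ y)
        have hdiff0 : L' (b'.move x y) - L' b' = 0 := by
          rcases mul_eq_zero.1 hxy0 with h | h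
          · exact absurd h (ne_of_gt hpos)
          · exact h
        rw [sub_eq_zero] at hdiff0
        rw [hdiff0, hb]
    obtain ⟨ξ, hξ, hreach⟩ := reach_omega c hnonneg hloop ρ0
    have hmz : L' ρ0 = 0 := by rw [← h0' ξ hξ]; exact (prop ρ0 ξ hreach rfl).symm
    calc L' ρ ≤ L' ρ0 := hmax ρ (Finset.mem_univ ρ)
      _ = 0 := hmz
  intro ρ
  have h1 := key L hL h0 ρ
  have hneg : (clumpMatrix c k).mulVec (fun σ => -L σ) = 0 := by
    have e : (clumpMatrix c k).mulVec (fun σ => -L σ)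
        = fun i => -((clumpMatrix c k).mulVec L i) := by
      funext i
      simp [Matrix.mulVec, dotProduct, mul_neg, Finset.sum_neg_distrib]
    rw [e, hL]
    funext i
    simp
  have h2 := key (fun σ => -L σ) hneg (fun σ hσ => by show -L σ = 0; rw [h0 σ hσ]; ring) ρ
  have h2' : -(L ρ) ≤ 0 := h2
  linarith

end AuxMax


section AuxAbsorb

open Finset Filter

variable {V : Type*} [Fintype V] [DecidableEq V] {c : V → V → ℝ}

/-- Harmonic extension of `f` restricted to `Ω`. -/
noncomputable def hatF (c : V → V → ℝ) {k : ℕ} (h : Config V k → Config V k → ℝ)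
    (f : Config V k → ℝ) (ζ : Config V k) : ℝ :=
  ∑ ξ ∈ Finset.univ.filter (fun ξ => inOmega c ξ), f ξ * h ξ ζ

lemma absorb_boundary {k : ℕ} (h : Config V k → Config V k → ℝ)
    (hlim : ∀ ξ : Config V k, inOmega c ξ → ∀ ζ : Config V k,
      Filter.Tendsto
        (fun t : ℝ => (NormedSpace.exp (t • clumpMatrix c k)).mulVec
          (fun ρ => if ρ = ξ then 1 else 0) ζ)
        Filter.atTop (nhds (h ξ ζ)))
    {ξ ρ : Config V k} (hξ : inOmega c ξ) (hρ : inOmega c ρ) :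
    h ξ ρ = (if ρ = ξ then 1 else 0) := by
  have hconst : ∀ t : ℝ, (NormedSpace.exp (t • clumpMatrix c k)).mulVec
      (fun σ => if σ = ξ then (1:ℝ) else 0) ρ = (if ρ = ξ then 1 else 0) :=
    fun t => exp_mulVec_row_zero _ ρ (clump_row_zero c ρ hρ) _ t
  have h1 := hlim ξ hξ ρ
  simp only [hconst] at h1
  exact tendsto_nhds_unique h1 tendsto_const_nhds

lemma absorb_harmonic {k : ℕ} (h : Config V k → Config V k → ℝ)
    (hlim : ∀ ξ : Config V k, inOmega c ξ → ∀ ζ : Config V k,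
      Filter.Tendsto
        (fun t : ℝ => (NormedSpace.exp (t • clumpMatrix c k)).mulVec
          (fun ρ => if ρ = ξ then 1 else 0) ζ)
        Filter.atTop (nhds (h ξ ζ)))
    {ξ : Config V k} (hξ : inOmega c ξ) :
    (clumpMatrix c k).mulVec (fun ζ => h ξ ζ) = 0 :=
  limit_harmonic _ _ _ (fun ζ => hlim ξ hξ ζ)

lemma hatF_harmonic {k : ℕ} (h : Config V k → Config V k → ℝ)
    (hlim : ∀ ξ : Config V k, inOmega c ξ → ∀ ζ : Config V k,
      Filter.Tendsto
        (fun t : ℝ => (NormedSpace.exp (t • clumpMatrix c k)).mulVec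
          (fun ρ => if ρ = ξ then 1 else 0) ζ)
        Filter.atTop (nhds (h ξ ζ)))
    (f : Config V k → ℝ) :
    (clumpMatrix c k).mulVec (hatF c h f) = 0 := by
  funext ρ
  have e : (clumpMatrix c k).mulVec (hatF c h f) ρ
      = ∑ ξ ∈ Finset.univ.filter (fun ξ => inOmega c ξ),
          f ξ * ((clumpMatrix c k).mulVec (fun ζ => h ξ ζ) ρ) := by
    unfold hatF Matrix.mulVec dotProduct
    calc (∑ ζ, clumpMatrix c k ρ ζ * ∑ ξ ∈ Finset.univ.filter (fun ξ => inOmega c ξ),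
            f ξ * h ξ ζ)
        = ∑ ζ, ∑ ξ ∈ Finset.univ.filter (fun ξ => inOmega c ξ),
            clumpMatrix c k ρ ζ * (f ξ * h ξ ζ) := by
          exact Finset.sum_congr rfl (fun ζ _ => Finset.mul_sum _ _ _)
      _ = ∑ ξ ∈ Finset.univ.filter (fun ξ => inOmega c ξ), ∑ ζ,
            clumpMatrix c k ρ ζ * (f ξ * h ξ ζ) := Finset.sum_comm
      _ = _ := by
          refine Finset.sum_congr rfl (fun ξ _ => ?_)
          rw [Finset.mul_sum]
          exact Finset.sum_congr rfl (fun ζ _ => by ring)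
  rw [e]
  have hz : (0 : Config V k → ℝ) ρ = 0 := rfl
  rw [hz]
  apply Finset.sum_eq_zero
  intro ξ hξ
  rw [absorb_harmonic h hlim (Finset.mem_filter.1 hξ).2]
  simp

lemma hatF_boundary {k : ℕ} (h : Config V k → Config V k → ℝ)
    (hlim : ∀ ξ : Config V k, inOmega c ξ → ∀ ζ : Config V k,
      Filter.Tendsto
        (fun t : ℝ => (NormedSpace.exp (t • clumpMatrix c k)).mulVec
          (fun ρ => if ρ = ξ then 1 else 0) ζ)
        Filter.atTop (nhds (h ξ ζ)))
    (f : Config V k → ℝ) {ρ : Config V k} (hρ : inOmega c ρ) :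
    hatF c h f ρ = f ρ := by
  unfold hatF
  have e : ∀ ξ ∈ Finset.univ.filter (fun ξ => inOmega c ξ),
      f ξ * h ξ ρ = if ρ = ξ then f ξ else 0 := by
    intro ξ hξ
    rw [absorb_boundary h hlim (Finset.mem_filter.1 hξ).2 hρ]
    by_cases he : ρ = ξ <;> simp [he]
  rw [Finset.sum_congr rfl e, Finset.sum_ite_eq]
  simp [hρ]

lemma hatF_one (hnonneg : ∀ x y, 0 ≤ c x y) (hloop : ∀ x, c x x = 0) {k : ℕ}
    (hne : Nonempty (Config V k)) (h : Config V k → Config V k → ℝ)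
    (hlim : ∀ ξ : Config V k, inOmega c ξ → ∀ ζ : Config V k,
      Filter.Tendsto
        (fun t : ℝ => (NormedSpace.exp (t • clumpMatrix c k)).mulVec
          (fun ρ => if ρ = ξ then 1 else 0) ζ)
        Filter.atTop (nhds (h ξ ζ))) :
    ∀ ζ, hatF c h (fun _ => (1:ℝ)) ζ = 1 := by
  have hharm : (clumpMatrix c k).mulVec
      (fun ζ => hatF c h (fun _ => (1:ℝ)) ζ - 1) = 0 := by
    have e : (fun ζ => hatF c h (fun _ => (1:ℝ)) ζ - 1)
        = (hatF c h (fun _ => (1:ℝ))) - (fun _ => (1:ℝ)) := rfl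
    rw [e, Matrix.mulVec_sub, hatF_harmonic h hlim, clump_mulVec_one]
    simp
  have hbd : ∀ ρ, inOmega c ρ → hatF c h (fun _ => (1:ℝ)) ρ - 1 = 0 := by
    intro ρ hρ
    rw [hatF_boundary h hlim _ hρ]
    simp
  have := max_principle c hnonneg hloop hne _ hharm hbd
  intro ζ
  have h2 := this ζ
  linarith

lemma rateA_sum (β : V → ℝ) {k : ℕ} (η : Config V k) (φ : Config V k → ℝ) :
    (∑ ζ, rateA c β η ζ * φ ζ)
      = ∑ x, ∑ y, (if η.1 x ≠ 0 then c x y * (η.1 x : ℝ) * β y * φ (η.move x y) else 0) := by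
  unfold rateA
  have e1 : (∑ ζ, (∑ x, ∑ y, if η.1 x ≠ 0 ∧ η.move x y = ζ then
        c x y * (η.1 x : ℝ) * β y else 0) * φ ζ)
      = ∑ ζ, ∑ x, ∑ y, (if η.1 x ≠ 0 ∧ η.move x y = ζ then
          c x y * (η.1 x : ℝ) * β y else 0) * φ ζ := by
    refine Finset.sum_congr rfl (fun ζ _ => ?_)
    rw [Finset.sum_mul]
    exact Finset.sum_congr rfl (fun x _ => Finset.sum_mul _ _ _)
  rw [e1, ← triple_swap2]
  refine Finset.sum_congr rfl (fun x _ => Finset.sum_congr rfl (fun y _ => ?_))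
  by_cases hx : η.1 x ≠ 0
  · rw [if_pos hx]
    have e2 : ∀ ζ, (if η.1 x ≠ 0 ∧ η.move x y = ζ then c x y * (η.1 x : ℝ) * β y else 0) * φ ζ
        = if η.move x y = ζ then c x y * (η.1 x : ℝ) * β y * φ ζ else 0 := by
      intro ζ
      by_cases hζ : η.move x y = ζ
      · rw [if_pos ⟨hx, hζ⟩, if_pos hζ]
      · rw [if_neg (fun hc => hζ hc.2), if_neg hζ, zero_mul]
    rw [Finset.sum_congr rfl (fun ζ _ => e2 ζ), Finset.sum_ite_eq]
    simp
  · rw [if_neg hx]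
    apply Finset.sum_eq_zero
    intro ζ _
    rw [if_neg (fun hc => hx hc.1), zero_mul]

lemma omega_csub {k : ℕ} {η : Config V (k+1)} (hη : inOmega c η) (z : V)
    (hz : η.1 z ≠ 0) : inOmega c (csub η z hz) := by
  intro x y
  have h0 := hη x y
  have hlex : (csub η z hz).1 x ≤ η.1 x := by rw [csub_apply]; omega
  have hley : (csub η z hz).1 y ≤ η.1 y := by rw [csub_apply]; omega
  rcases mul_eq_zero.1 h0 with h1 | h2
  · rcases mul_eq_zero.1 h1 with hc | hx
    · rw [hc]; ring
    · have hx0 : η.1 x = 0 := by exact_mod_cast hx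
      have : (csub η z hz).1 x = 0 := by omega
      rw [this]; push_cast; ring
  · have hy0 : η.1 y = 0 := by exact_mod_cast h2
    have : (csub η z hz).1 y = 0 := by omega
    rw [this]; push_cast; ring

lemma meta_eq (β : V → ℝ) (hnonneg : ∀ x y, 0 ≤ c x y) (hloop : ∀ x, c x x = 0) {k : ℕ}
    (hne : Nonempty (Config V k)) (h : Config V k → Config V k → ℝ)
    (hlim : ∀ ξ : Config V k, inOmega c ξ → ∀ ζ : Config V k,
      Filter.Tendsto
        (fun t : ℝ => (NormedSpace.exp (t • clumpMatrix c k)).mulVec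
          (fun ρ => if ρ = ξ then 1 else 0) ζ)
        Filter.atTop (nhds (h ξ ζ)))
    (f : Config V k → ℝ) {η : Config V k} (hη : inOmega c η) :
    metaGen c β h f η = ∑ x, ∑ y, c x y * (η.1 x : ℝ) * β y *
      (hatF c h f (η.move x y) - hatF c h f η) := by
  unfold metaGen
  have e1 : ∀ ξ : Config V k,
      (if inOmega c ξ ∧ ξ ≠ η then rateM c β h η ξ * (f ξ - f η) else 0)
      = (if inOmega c ξ then rateM c β h η ξ * (f ξ - f η) else 0) := by
    intro ξ
    by_cases h1 : inOmega c ξ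
    · by_cases h2 : ξ = η
      · rw [h2]; simp
      · simp [h1, h2]
    · simp [h1]
  rw [Finset.sum_congr rfl (fun ξ _ => e1 ξ), ← Finset.sum_filter]
  have e2 : (∑ ξ ∈ Finset.univ.filter (fun ξ => inOmega c ξ),
        rateM c β h η ξ * (f ξ - f η))
      = (∑ ζ, rateA c β η ζ * hatF c h f ζ)
        - f η * (∑ ζ, rateA c β η ζ * hatF c h (fun _ => (1:ℝ)) ζ) := by
    unfold rateM hatF
    calc (∑ ξ ∈ Finset.univ.filter (fun ξ => inOmega c ξ),
            (∑ ζ, rateA c β η ζ * h ξ ζ) * (f ξ - f η))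
        = ∑ ξ ∈ Finset.univ.filter (fun ξ => inOmega c ξ), ∑ ζ,
            rateA c β η ζ * (h ξ ζ * (f ξ - f η)) := by
          refine Finset.sum_congr rfl (fun ξ _ => ?_)
          rw [Finset.sum_mul]
          exact Finset.sum_congr rfl (fun ζ _ => by ring)
      _ = ∑ ζ, ∑ ξ ∈ Finset.univ.filter (fun ξ => inOmega c ξ),
            rateA c β η ζ * (h ξ ζ * (f ξ - f η)) := Finset.sum_comm
      _ = ∑ ζ, (rateA c β η ζ * (∑ ξ ∈ Finset.univ.filter (fun ξ => inOmega c ξ),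
              f ξ * h ξ ζ)
            - f η * (rateA c β η ζ * (∑ ξ ∈ Finset.univ.filter (fun ξ => inOmega c ξ),
              (fun _ => (1:ℝ)) ξ * h ξ ζ))) := by
          refine Finset.sum_congr rfl (fun ζ _ => ?_)
          calc (∑ ξ ∈ Finset.univ.filter (fun ξ => inOmega c ξ),
                  rateA c β η ζ * (h ξ ζ * (f ξ - f η)))
              = ∑ ξ ∈ Finset.univ.filter (fun ξ => inOmega c ξ),
                  (rateA c β η ζ * (f ξ * h ξ ζ)
                    - f η * (rateA c β η ζ * ((fun _ => (1:ℝ)) ξ * h ξ ζ))) := by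
                refine Finset.sum_congr rfl (fun ξ _ => ?_)
                simp only
                ring
            _ = _ := by
                rw [Finset.sum_sub_distrib, ← Finset.mul_sum, ← Finset.mul_sum,
                  ← Finset.mul_sum]
      _ = _ := by rw [Finset.sum_sub_distrib, ← Finset.mul_sum]
  rw [e2, rateA_sum β η, rateA_sum β η]
  have hone := hatF_one hnonneg hloop hne h hlim
  simp only [hone]
  have hbd := hatF_boundary h hlim f hη
  rw [Finset.mul_sum, ← Finset.sum_sub_distrib]
  refine Finset.sum_congr rfl (fun x _ => ?_)
  rw [Finset.mul_sum, ← Finset.sum_sub_distrib]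
  refine Finset.sum_congr rfl (fun y _ => ?_)
  by_cases hx : η.1 x ≠ 0
  · rw [if_pos hx, if_pos hx, hbd]
    ring
  · rw [if_neg hx, if_neg hx]
    push_neg at hx
    have hx0 : ((η.1 x : ℕ) : ℝ) = 0 := by rw [hx]; norm_num
    rw [hx0]
    ring

lemma key_id (hsymm : ∀ x y, c x y = c y x) (hnonneg : ∀ x y, 0 ≤ c x y)
    (hloop : ∀ x, c x x = 0) {i : ℕ}
    (hne2 : Nonempty (Config V (i+1+1)))
    (h : Config V (i+1+1) → Config V (i+1+1) → ℝ)
    (h' : Config V (i+1) → Config V (i+1) → ℝ)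
    (hlim2 : ∀ ξ : Config V (i+1+1), inOmega c ξ → ∀ ζ : Config V (i+1+1),
      Filter.Tendsto
        (fun t : ℝ => (NormedSpace.exp (t • clumpMatrix c (i+1+1))).mulVec
          (fun ρ => if ρ = ξ then 1 else 0) ζ)
        Filter.atTop (nhds (h ξ ζ)))
    (hlim1 : ∀ ξ : Config V (i+1), inOmega c ξ → ∀ ζ : Config V (i+1),
      Filter.Tendsto
        (fun t : ℝ => (NormedSpace.exp (t • clumpMatrix c (i+1))).mulVec
          (fun ρ => if ρ = ξ then 1 else 0) ζ)
        Filter.atTop (nhds (h' ξ ζ)))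
    (g : Config V (i+1) → ℝ) :
    hatF c h (annihilate g) = annihilate (hatF c h' g) := by
  have hB1 : (clumpMatrix c (i+1)).mulVec (hatF c h' g) = 0 := hatF_harmonic h' hlim1 g
  have hB2a : (clumpMatrix c (i+1+1)).mulVec (hatF c h (annihilate g)) = 0 :=
    hatF_harmonic h hlim2 (annihilate g)
  have hB2b : (clumpMatrix c (i+1+1)).mulVec (annihilate (hatF c h' g)) = 0 := by
    funext ρ
    rw [clump_mulVec, IB c hsymm (hatF c h' g) ρ]
    have e : (fun ξ : Config V (i+1) => ∑ x, ∑ y, c x y * (ξ.1 x : ℝ) * (ξ.1 y : ℝ) *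
        (hatF c h' g (ξ.move x y) - hatF c h' g ξ)) = fun _ => (0:ℝ) := by
      funext ξ
      rw [← clump_mulVec, hB1]
      rfl
    rw [e, annihilate_eq]
    have hz : (0 : Config V (i+1+1) → ℝ) ρ = 0 := rfl
    rw [hz]
    apply Finset.sum_eq_zero
    intro z _
    by_cases hzz : ρ.1 z ≠ 0
    · simp [dif_pos hzz]
    · simp [dif_neg hzz]
  have hharm : (clumpMatrix c (i+1+1)).mulVec
      (fun ζ => annihilate (hatF c h' g) ζ - hatF c h (annihilate g) ζ) = 0 := by
    have e : (fun ζ => annihilate (hatF c h' g) ζ - hatF c h (annihilate g) ζ)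
        = (annihilate (hatF c h' g)) - (hatF c h (annihilate g)) := rfl
    rw [e, Matrix.mulVec_sub, hB2a, hB2b]
    simp
  have hbd : ∀ ρ, inOmega c ρ →
      annihilate (hatF c h' g) ρ - hatF c h (annihilate g) ρ = 0 := by
    intro ρ hρ
    rw [hatF_boundary h hlim2 (annihilate g) hρ]
    rw [sub_eq_zero, annihilate_eq (hatF c h' g) ρ, annihilate_eq g ρ]
    refine Finset.sum_congr rfl (fun z _ => ?_)
    by_cases hz : ρ.1 z ≠ 0
    · simp only [dif_pos hz]
      rw [hatF_boundary h' hlim1 g (omega_csub hρ z hz)]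
    · simp only [dif_neg hz]
  have hall := max_principle c hnonneg hloop hne2 _ hharm hbd
  funext ζ
  have := hall ζ
  linarith

end AuxAbsorb


theorem metastable_intertwining
    {V : Type*} [Fintype V] [DecidableEq V] (c : V → V → ℝ) (β : V → ℝ)
    (hsymm : ∀ x y, c x y = c y x) (hnonneg : ∀ x y, 0 ≤ c x y)
    (hloop : ∀ x, c x x = 0) (hconn : (graphOf c).Connected)
    (hβ : ∀ x, 0 < β x) (j : ℕ) (hj : 1 ≤ j)
    (h : Config V (j + 1) → Config V (j + 1) → ℝ)
    (h' : Config V j → Config V j → ℝ)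
    (hlim : ∀ ξ : Config V (j + 1), inOmega c ξ → ∀ ζ : Config V (j + 1),
      Filter.Tendsto
        (fun t : ℝ => (NormedSpace.exp (t • clumpMatrix c (j + 1))).mulVec
          (fun ρ => if ρ = ξ then 1 else 0) ζ)
        Filter.atTop (nhds (h ξ ζ)))
    (hlim' : ∀ ξ : Config V j, inOmega c ξ → ∀ ζ : Config V j,
      Filter.Tendsto
        (fun t : ℝ => (NormedSpace.exp (t • clumpMatrix c j)).mulVec
          (fun ρ => if ρ = ξ then 1 else 0) ζ)
        Filter.atTop (nhds (h' ξ ζ))) :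
    ∀ (g : Config V j → ℝ) (η : Config V (j + 1)), inOmega c η →
      metaGen c β h (annihilate g) η = annihilate (metaGen c β h' g) η := by
  intro g η hη
  rcases isEmpty_or_nonempty V with hV | hV
  · exfalso
    have h2 : (0:ℕ) = j + 1 + 1 := by
      have := η.2
      simpa [Finset.univ_eq_empty] using this.symm
    omega
  obtain ⟨i, rfl⟩ : ∃ i, j = i + 1 := ⟨j - 1, (Nat.succ_pred_eq_of_pos hj).symm⟩
  have hne1 : Nonempty (Config V (i+1)) := ⟨stackConfig V (i+1) (Classical.arbitrary V)⟩
  have hne2 : Nonempty (Config V (i+1+1)) := ⟨η⟩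
  have hkey := key_id hsymm hnonneg hloop hne2 h h' hlim hlim' g
  rw [meta_eq β hnonneg hloop hne2 h hlim (annihilate g) hη, hkey,
    IA c β (hatF c h' g) η]
  rw [annihilate_eq (metaGen c β h' g) η,
    annihilate_eq (fun ξ => ∑ x, ∑ y, c x y * (ξ.1 x : ℝ) * β y *
      (hatF c h' g (ξ.move x y) - hatF c h' g ξ)) η]
  refine Finset.sum_congr rfl (fun z _ => ?_)
  by_cases hz : η.1 z ≠ 0
  · simp only [dif_pos hz]
    rw [meta_eq β hnonneg hloop hne1 h' hlim' g (omega_csub hη z hz)]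
  · simp only [dif_neg hz]
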